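/- Let S ⊂ D be a Λ₀-Carleson family, and for each Q ∈ S let F(Q) ⊆ D(Q) be a Λ-Carleson family with Q ∈ F(Q). Then the augmented family S̃ = ⋃_{Q∈S} F̃(Q), where F̃(Q) consists of those cubes of F(Q) not contained in any R ∈ S with R ⊊ Q, is Λ(Λ₀+1)-Carleson. -/

import Mathlib

open MeasureTheory Set
open scoped ENNReal Classical

structure Cube (n : ℕ) where
  corner : Fin n → ℝ
  side : ℝ
  side_pos : 0 < side

namespace Cube

def toSet {n : ℕ} (Q : Cube n) : Set (Fin n → ℝ) :=
  {y | ∀ i, Q.corner i ≤ y i ∧ y i < Q.corner i + Q.side}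

/-- `Q'` is one of the `2^n` dyadic children of `Q`. -/
def IsChild {n : ℕ} (Q' Q : Cube n) : Prop :=
  Q'.side = Q.side / 2 ∧ ∃ ε : Fin n → Bool,
    Q'.corner = fun i => Q.corner i + (if ε i then Q.side / 2 else 0)

/-- `Q' ∈ 𝒟(Q)`: `Q'` is obtained from `Q` by iteratively taking dyadic children. -/
def IsDescendant {n : ℕ} (Q' Q : Cube n) : Prop :=
  Relation.ReflTransGen IsChild Q' Q

variable {n : ℕ}

lemma corner_mem_toSet (Q : Cube n) : Q.corner ∈ Q.toSet :=
  fun i => ⟨le_refl _, by linarith [Q.side_pos]⟩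

lemma toSet_nonempty (Q : Cube n) : Q.toSet.Nonempty := ⟨Q.corner, Q.corner_mem_toSet⟩

lemma IsChild.toSet_subset {Q' Q : Cube n} (h : Q'.IsChild Q) : Q'.toSet ⊆ Q.toSet := by
  obtain ⟨hs, ε, hc⟩ := h
  intro y hy i
  obtain ⟨h1, h2⟩ := hy i
  rw [hc] at h1 h2
  rw [hs] at h2
  simp only at h1 h2
  have hsp := Q.side_pos
  constructor
  · split_ifs at h1 with h <;> linarith
  · split_ifs at h2 with h <;> linarith

lemma IsDescendant.toSet_subset {Q' Q : Cube n} (h : Q'.IsDescendant Q) :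
    Q'.toSet ⊆ Q.toSet := by
  induction h with
  | refl => exact le_refl _
  | tail _ hchild ih => exact le_trans ih hchild.toSet_subset

lemma IsDescendant.side_le {Q' Q : Cube n} (h : Q'.IsDescendant Q) : Q'.side ≤ Q.side := by
  induction h with
  | refl => exact le_refl _
  | @tail b c _ hchild ih =>
    have hb := b.side_pos
    have hc := c.side_pos
    rw [hchild.1] at ih hb
    linarith

lemma IsDescendant.eq_of_side_le {Q' Q : Cube n} (h : Q'.IsDescendant Q)
    (hs : Q.side ≤ Q'.side) : Q' = Q := by
  cases h.cases_head with
  | inl h => exact h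
  | inr h =>
    obtain ⟨c, hc, hd⟩ := h
    have h1 : c.side ≤ Q.side := IsDescendant.side_le hd
    have h2 := Q'.side_pos
    rw [hc.1] at hs h2
    linarith

lemma IsChild.disjoint {Q₁ Q₂ Q : Cube n} (h1 : Q₁.IsChild Q) (h2 : Q₂.IsChild Q)
    (hne : Q₁ ≠ Q₂) : Disjoint Q₁.toSet Q₂.toSet := by
  obtain ⟨hs1, ε₁, hc1⟩ := h1
  obtain ⟨hs2, ε₂, hc2⟩ := h2
  have hε : ε₁ ≠ ε₂ := by
    rintro rfl
    apply hne
    cases Q₁; cases Q₂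
    simp_all
  obtain ⟨i, hi⟩ := Function.ne_iff.mp hε
  rw [Set.disjoint_left]
  intro y hy1 hy2
  have t1 := hy1 i
  have t2 := hy2 i
  rw [hc1, hs1] at t1
  rw [hc2, hs2] at t2
  have hsp := Q.side_pos
  rcases Bool.eq_false_or_eq_true (ε₁ i) with h | h <;>
    rcases Bool.eq_false_or_eq_true (ε₂ i) with h' | h' <;>
      simp [h, h'] at t1 t2 hi <;> linarith [t1.1, t1.2, t2.1, t2.2]

lemma grid {P Q R : Cube n} (hP : P.IsDescendant R) (hQ : Q.IsDescendant R) :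
    P.IsDescendant Q ∨ Q.IsDescendant P ∨ Disjoint P.toSet Q.toSet := by
  induction hQ using Relation.ReflTransGen.head_induction_on with
  | refl => exact Or.inl hP
  | @head Q' Q'' hchild hdesc ih =>
    -- Q' is a child of Q'', Q'' descends to R ; ih: trichotomy of P vs Q''
    rcases ih with h | h | h
    · -- P desc Q''
      cases Relation.ReflTransGen.cases_tail h with
      | inl heq =>
        subst heq
        exact Or.inr (Or.inl (Relation.ReflTransGen.single hchild))
      | inr h' =>
        obtain ⟨c, hd, hc⟩ := h'
        -- hd : P desc c, hc : c child Q''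
        by_cases hcq : c = Q'
        · subst hcq; exact Or.inl hd
        · exact Or.inr (Or.inr (Set.disjoint_of_subset (IsDescendant.toSet_subset hd)
            (le_refl _) (hc.disjoint hchild hcq)))
    · exact Or.inr (Or.inl (Relation.ReflTransGen.trans (Relation.ReflTransGen.single hchild) h))
    · exact Or.inr (Or.inr (Set.disjoint_of_subset (le_refl _) hchild.toSet_subset h))

lemma toSet_univ_of_zero (hn : n = 0) (Q : Cube n) : Q.toSet = univ := by
  apply Set.eq_univ_iff_forall.mpr
  intro y i
  exact absurd i.isLt (by omega)

lemma eq_of_toSet_eq {P Q : Cube n} (hn : n ≠ 0) (h : P.toSet = Q.toSet) : P = Q := by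
  have hcorner : P.corner = Q.corner := by
    have h1 : P.corner ∈ Q.toSet := h ▸ P.corner_mem_toSet
    have h2 : Q.corner ∈ P.toSet := h ▸ Q.corner_mem_toSet
    funext i
    exact le_antisymm ((h2 i).1) ((h1 i).1)
  have hside : P.side = Q.side := by
    by_contra hne
    obtain ⟨i⟩ : Nonempty (Fin n) := ⟨⟨0, Nat.pos_of_ne_zero hn⟩⟩
    rcases lt_or_gt_of_ne hne with hlt | hlt
    · -- P.side < Q.side : point at corner + P.side in Q not in P
      have hy : Function.update Q.corner i (Q.corner i + P.side) ∈ Q.toSet := by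
        intro j
        rcases eq_or_ne j i with rfl | hj
        · simp [Function.update_self]
          constructor
          · linarith [P.side_pos]
          · linarith
        · simp [Function.update_of_ne hj]
          exact Q.side_pos
      rw [← h] at hy
      have := (hy i).2
      rw [Function.update_self, hcorner] at this
      linarith
    · have hy : Function.update P.corner i (P.corner i + Q.side) ∈ P.toSet := by
        intro j
        rcases eq_or_ne j i with rfl | hj
        · simp [Function.update_self]
          constructor
          · linarith [Q.side_pos]
          · linarith
        · simp [Function.update_of_ne hj]
          exact P.side_pos
      rw [h] at hy
      have := (hy i).2
      rw [Function.update_self, hcorner] at this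
      linarith
  cases P; cases Q; simp_all

lemma toSet_eq_pi (Q : Cube n) :
    Q.toSet = univ.pi (fun i => Ico (Q.corner i) (Q.corner i + Q.side)) := by
  ext y
  simp [toSet, Set.mem_pi, Ico]

lemma volume_toSet (Q : Cube n) : volume Q.toSet = ENNReal.ofReal Q.side ^ n := by
  rw [toSet_eq_pi, volume_pi_pi]
  simp [Real.volume_Ico]

lemma volume_toSet_pos (Q : Cube n) : 0 < volume Q.toSet := by
  rw [volume_toSet]
  exact ENNReal.pow_pos (ENNReal.ofReal_pos.mpr Q.side_pos) n


end Cube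

/-- The three dyadic lattice axioms (DL-1), (DL-2), (DL-3). -/
def IsDyadicLattice {n : ℕ} (D : Set (Cube n)) : Prop :=
  (∀ Q ∈ D, ∀ Q' : Cube n, Q'.IsChild Q → Q' ∈ D) ∧
  (∀ Q ∈ D, ∀ Q' ∈ D, ∃ P ∈ D, Q.IsDescendant P ∧ Q'.IsDescendant P) ∧
  (∀ K : Set (Fin n → ℝ), IsCompact K → ∃ Q ∈ D, K ⊆ Q.toSet)

/-- `S` is a `Λ`-Carleson family relative to the lattice `D`. -/
def IsCarleson {n : ℕ} (Λ : ℝ) (D S : Set (Cube n)) : Prop :=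
  ∀ Q ∈ D, (∑' P : {P : Cube n // P ∈ S ∧ P.toSet ⊆ Q.toSet}, volume P.1.toSet)
    ≤ ENNReal.ofReal Λ * volume Q.toSet

/-- `S` is an `η`-sparse family. -/
def IsSparse {n : ℕ} (η : ℝ) (S : Set (Cube n)) : Prop :=
  ∃ E : Cube n → Set (Fin n → ℝ),
    (∀ Q ∈ S, E Q ⊆ Q.toSet ∧ MeasurableSet (E Q) ∧
      ENNReal.ofReal η * volume Q.toSet ≤ volume (E Q)) ∧
    S.PairwiseDisjoint E

lemma lattice_nesting {n : ℕ} {D : Set (Cube n)} (hD : IsDyadicLattice D) {Q Q' : Cube n}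
    (hQ : Q ∈ D) (hQ' : Q' ∈ D) (hint : (Q.toSet ∩ Q'.toSet).Nonempty) :
    Q.IsDescendant Q' ∨ Q'.IsDescendant Q := by
  obtain ⟨P, _, h1, h2⟩ := hD.2.1 Q hQ Q' hQ'
  rcases Cube.grid h1 h2 with h | h | h
  · exact Or.inl h
  · exact Or.inr h
  · exact absurd hint (by
      rw [Set.not_nonempty_iff_eq_empty]
      exact Set.disjoint_iff_inter_eq_empty.mp h)

theorem augmentation_carleson {n : ℕ} (D S : Set (Cube n))
    (hD : IsDyadicLattice D) (hS : S ⊆ D) (Λ₀ Λ : ℝ)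
    (h0 : IsCarleson Λ₀ D S) (F : Cube n → Set (Cube n))
    (hF : ∀ Q ∈ S, Q ∈ F Q ∧ F Q ⊆ {R : Cube n | R.IsDescendant Q} ∧
      IsCarleson Λ D (F Q)) :
    IsCarleson (Λ * (Λ₀ + 1)) D
      (⋃ Q ∈ S, {Q' ∈ F Q | ¬∃ R ∈ S, R.toSet ⊂ Q.toSet ∧ Q'.toSet ⊆ R.toSet}) := by
  intro Q hQ
  rcases Set.eq_empty_or_nonempty S with hSe | hSne
  · have : IsEmpty {P : Cube n //
        P ∈ (⋃ Q' ∈ S, {R ∈ F Q' | ¬∃ R' ∈ S, R'.toSet ⊂ Q'.toSet ∧ R.toSet ⊆ R'.toSet}) ∧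
        P.toSet ⊆ Q.toSet} := by
      constructor
      rintro ⟨P, hP, -⟩
      simp [hSe] at hP
    rw [tsum_empty]
    exact zero_le
  -- Λ₀ is nonnegative
  have hΛ₀ : 0 ≤ Λ₀ := by
    obtain ⟨R₀, hR₀⟩ := hSne
    have hb := h0 R₀ (hS hR₀)
    have hle : volume R₀.toSet ≤ ENNReal.ofReal Λ₀ * volume R₀.toSet :=
      le_trans (ENNReal.le_tsum (⟨R₀, hR₀, subset_refl _⟩ :
        {P : Cube n // P ∈ S ∧ P.toSet ⊆ R₀.toSet})) hb
    by_contra hneg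
    push_neg at hneg
    rw [ENNReal.ofReal_eq_zero.mpr hneg.le, zero_mul, le_zero_iff] at hle
    exact (Cube.volume_toSet_pos R₀).ne' hle
  set v : Cube n → ℝ≥0∞ := fun P => volume P.toSet with hv
  set t : Cube n → Set (Cube n) := fun R =>
    {P ∈ F R | ¬∃ R' ∈ S, R'.toSet ⊂ R.toSet ∧ P.toSet ⊆ R'.toSet} ∩
      {P | P.toSet ⊆ Q.toSet} with ht
  set T : Set (Cube n) :=
    {P | P ∈ (⋃ Q' ∈ S, {R ∈ F Q' | ¬∃ R' ∈ S, R'.toSet ⊂ Q'.toSet ∧ R.toSet ⊆ R'.toSet}) ∧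
      P.toSet ⊆ Q.toSet} with hT
  -- the t R cover T
  have hcover : ∀ P ∈ T, ∃ R ∈ S, P ∈ t R := by
    rintro P ⟨hP1, hP2⟩
    simp only [Set.mem_iUnion] at hP1
    obtain ⟨R, hR, hPR⟩ := hP1
    exact ⟨R, hR, ⟨hPR, hP2⟩⟩
  -- descendant info
  have hFdesc : ∀ R ∈ S, ∀ P ∈ F R, P.IsDescendant R := fun R hR P hP => (hF R hR).2.1 hP
  -- Q is strictly inside R for "bad" R with a contribution
  have hQsub : ∀ R ∈ S, ¬(R.toSet ⊆ Q.toSet) → (t R).Nonempty → Q.toSet ⊂ R.toSet := by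
    rintro R hR hnsub ⟨P, hP⟩
    have hPR : P.toSet ⊆ R.toSet := (Cube.IsDescendant.toSet_subset (hFdesc R hR P hP.1.1))
    have hint : (Q.toSet ∩ R.toSet).Nonempty :=
      ⟨P.corner, hP.2 P.corner_mem_toSet, hPR P.corner_mem_toSet⟩
    rcases lattice_nesting hD hQ (hS hR) hint with h | h
    · exact lt_of_le_not_ge (Cube.IsDescendant.toSet_subset h) hnsub
    · exact absurd (Cube.IsDescendant.toSet_subset h) hnsub
  -- at most one bad R contributes
  have claim : ∀ R₁ ∈ S, ∀ R₂ ∈ S, ¬(R₁.toSet ⊆ Q.toSet) → ¬(R₂.toSet ⊆ Q.toSet) →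
      (t R₁).Nonempty → (t R₂).Nonempty → R₁ = R₂ := by
    intro R₁ hR₁ R₂ hR₂ hn₁ hn₂ hne₁ hne₂
    have hq1 := hQsub R₁ hR₁ hn₁ hne₁
    have hq2 := hQsub R₂ hR₂ hn₂ hne₂
    have hn0 : n ≠ 0 := by
      intro h0'
      exact hq1.ne (by rw [Cube.toSet_univ_of_zero h0' Q, Cube.toSet_univ_of_zero h0' R₁])
    have main : ∀ A ∈ S, ∀ B ∈ S, A.IsDescendant B → Q.toSet ⊆ A.toSet →
        (t B).Nonempty → A = B := by
      rintro A hA B hB hdesc hQA ⟨PB, hPB⟩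
      by_cases heq : A.toSet = B.toSet
      · exact Cube.eq_of_toSet_eq hn0 heq
      · exfalso
        have hstrict : A.toSet ⊂ B.toSet :=
          lt_of_le_of_ne (Cube.IsDescendant.toSet_subset hdesc) heq
        exact hPB.1.2 ⟨A, hA, hstrict, hPB.2.trans hQA⟩
    have hint : (R₁.toSet ∩ R₂.toSet).Nonempty := by
      obtain ⟨x, hx⟩ := Q.toSet_nonempty
      exact ⟨x, hq1.1 hx, hq2.1 hx⟩
    rcases lattice_nesting hD (hS hR₁) (hS hR₂) hint with h | h
    · exact main R₁ hR₁ R₂ hR₂ h hq1.1 hne₂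
    · exact (main R₂ hR₂ R₁ hR₁ h hq2.1 hne₁).symm
  -- auxiliary bounding functions
  set h₁ : ↥S → ℝ≥0∞ := fun R =>
    if R.1.toSet ⊆ Q.toSet then ENNReal.ofReal Λ * v R.1 else 0 with hh₁
  set h₂ : ↥S → ℝ≥0∞ := fun R =>
    if ¬(R.1.toSet ⊆ Q.toSet) ∧ (t R.1).Nonempty then ENNReal.ofReal Λ * volume Q.toSet
      else 0 with hh₂
  -- key bound for each R ∈ S
  have keybound : ∀ R : ↥S, (∑' P : Cube n, (t R.1).indicator v P) ≤ h₁ R + h₂ R := by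
    intro R
    by_cases hsub : R.1.toSet ⊆ Q.toSet
    · have hmono : ∀ P : Cube n, (t R.1).indicator v P ≤
          ({P | P ∈ F R.1 ∧ P.toSet ⊆ R.1.toSet}).indicator v P := by
        intro P
        apply Set.indicator_le_indicator_of_subset
        · rintro P' ⟨hP'1, hP'2⟩
          exact ⟨hP'1.1, Cube.IsDescendant.toSet_subset (hFdesc R.1 R.2 P' hP'1.1)⟩
        · intro P'; exact zero_le
      calc (∑' P : Cube n, (t R.1).indicator v P)
          ≤ ∑' P : Cube n, ({P | P ∈ F R.1 ∧ P.toSet ⊆ R.1.toSet}).indicator v P :=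
            ENNReal.tsum_le_tsum hmono
        _ = ∑' P : {P : Cube n // P ∈ F R.1 ∧ P.toSet ⊆ R.1.toSet}, v P.1 :=
            (tsum_subtype _ v).symm
        _ ≤ ENNReal.ofReal Λ * volume R.1.toSet := (hF R.1 R.2).2.2 R.1 (hS R.2)
        _ = h₁ R := by rw [hh₁]; simp only [hsub, if_true, hv]
        _ ≤ h₁ R + h₂ R := le_self_add
    · by_cases hne : (t R.1).Nonempty
      · have hmono : ∀ P : Cube n, (t R.1).indicator v P ≤
            ({P | P ∈ F R.1 ∧ P.toSet ⊆ Q.toSet}).indicator v P := by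
          intro P
          apply Set.indicator_le_indicator_of_subset
          · rintro P' ⟨hP'1, hP'2⟩
            exact ⟨hP'1.1, hP'2⟩
          · intro P'; exact zero_le
        calc (∑' P : Cube n, (t R.1).indicator v P)
            ≤ ∑' P : Cube n, ({P | P ∈ F R.1 ∧ P.toSet ⊆ Q.toSet}).indicator v P :=
              ENNReal.tsum_le_tsum hmono
          _ = ∑' P : {P : Cube n // P ∈ F R.1 ∧ P.toSet ⊆ Q.toSet}, v P.1 :=
              (tsum_subtype _ v).symm
          _ ≤ ENNReal.ofReal Λ * volume Q.toSet := (hF R.1 R.2).2.2 Q hQ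
          _ = h₂ R := by rw [hh₂]; simp only [hsub, hne, not_false_iff, and_self, if_true]
          _ ≤ h₁ R + h₂ R := le_add_self
      · have hzero : ∀ P : Cube n, (t R.1).indicator v P = 0 := by
          intro P
          apply Set.indicator_of_notMem
          intro hP
          exact hne ⟨P, hP⟩
        rw [tsum_congr hzero, tsum_zero]
        exact zero_le
  -- bound for the sum of h₁
  have bound1 : (∑' R : ↥S, h₁ R) ≤ ENNReal.ofReal Λ * (ENNReal.ofReal Λ₀ * volume Q.toSet) := by
    have e0 : ∀ R : ↥S, h₁ R = ENNReal.ofReal Λ *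
        (if R.1.toSet ⊆ Q.toSet then v R.1 else 0) := by
      intro R
      rw [hh₁]
      by_cases h : R.1.toSet ⊆ Q.toSet <;> simp [h]
    rw [tsum_congr e0, ENNReal.tsum_mul_left]
    apply mul_le_mul_right
    have e1 : (∑' R : ↥S, (if R.1.toSet ⊆ Q.toSet then v R.1 else 0)) =
        ∑' P : {P : Cube n // P ∈ S ∧ P.toSet ⊆ Q.toSet}, v P.1 :=
      calc (∑' R : ↥S, (if R.1.toSet ⊆ Q.toSet then v R.1 else 0))
          = ∑' P : Cube n, S.indicator (fun R => if R.toSet ⊆ Q.toSet then v R else 0) P :=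
            tsum_subtype S (fun R => if R.toSet ⊆ Q.toSet then v R else 0)
        _ = ∑' P : Cube n, ({P : Cube n | P ∈ S ∧ P.toSet ⊆ Q.toSet}).indicator v P := by
            apply tsum_congr
            intro P
            by_cases hm1 : P ∈ S <;> by_cases hm2 : P.toSet ⊆ Q.toSet <;>
              simp [Set.indicator, hm1, hm2]
        _ = ∑' P : {P : Cube n // P ∈ S ∧ P.toSet ⊆ Q.toSet}, v P.1 :=
            (tsum_subtype _ v).symm
    rw [e1]
    exact h0 Q hQ
  -- bound for the sum of h₂
  have bound2 : (∑' R : ↥S, h₂ R) ≤ ENNReal.ofReal Λ * volume Q.toSet := by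
    by_cases hB : ∃ R : ↥S, ¬(R.1.toSet ⊆ Q.toSet) ∧ (t R.1).Nonempty
    · obtain ⟨R₀, hR₀⟩ := hB
      have huniq : ∀ b : ↥S, b ≠ R₀ → h₂ b = 0 := by
        intro b hb
        rw [hh₂]
        simp only []
        rw [if_neg]
        rintro ⟨hb1, hb2⟩
        exact hb (Subtype.ext (claim b.1 b.2 R₀.1 R₀.2 hb1 hR₀.1 hb2 hR₀.2))
      rw [tsum_eq_single R₀ huniq, hh₂]
      by_cases h : ¬(R₀.1.toSet ⊆ Q.toSet) ∧ (t R₀.1).Nonempty <;> simp [h]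
    · push_neg at hB
      have hz : ∀ R : ↥S, h₂ R = 0 := by
        intro R
        rw [hh₂]
        simp only []
        rw [if_neg]
        rintro ⟨hb1, hb2⟩
        exact absurd (hB R hb1) hb2.ne_empty
      rw [tsum_congr hz, tsum_zero]
      exact zero_le
  -- final arithmetic
  have harith : ENNReal.ofReal Λ * (ENNReal.ofReal Λ₀ * volume Q.toSet) +
      ENNReal.ofReal Λ * volume Q.toSet ≤
      ENNReal.ofReal (Λ * (Λ₀ + 1)) * volume Q.toSet := by
    have e : ENNReal.ofReal Λ * (ENNReal.ofReal Λ₀ * volume Q.toSet) +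
        ENNReal.ofReal Λ * volume Q.toSet =
        (ENNReal.ofReal Λ * (ENNReal.ofReal Λ₀ + 1)) * volume Q.toSet := by ring
    rw [e]
    apply mul_le_mul_left
    rcases le_or_gt Λ 0 with hΛ | hΛ
    · rw [ENNReal.ofReal_eq_zero.mpr hΛ, zero_mul]
      exact zero_le
    · rw [← ENNReal.ofReal_one, ← ENNReal.ofReal_add hΛ₀ zero_le_one,
        ← ENNReal.ofReal_mul hΛ.le]
  -- put it together
  calc (∑' P : {P : Cube n //
        P ∈ (⋃ Q' ∈ S, {R ∈ F Q' | ¬∃ R' ∈ S, R'.toSet ⊂ Q'.toSet ∧ R.toSet ⊆ R'.toSet}) ∧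
        P.toSet ⊆ Q.toSet}, volume P.1.toSet)
      = ∑' P : Cube n, T.indicator v P := tsum_subtype T v
    _ ≤ ∑' P : Cube n, ∑' R : ↥S, (t R.1).indicator v P := by
        apply ENNReal.tsum_le_tsum
        intro P
        by_cases hP : P ∈ T
        · obtain ⟨R, hR, hPt⟩ := hcover P hP
          calc T.indicator v P = v P := Set.indicator_of_mem hP v
            _ = (t R).indicator v P := (Set.indicator_of_mem hPt v).symm
            _ ≤ ∑' R' : ↥S, (t R'.1).indicator v P :=
                ENNReal.le_tsum (⟨R, hR⟩ : ↥S)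
        · rw [Set.indicator_of_notMem hP]
          exact zero_le
    _ = ∑' R : ↥S, ∑' P : Cube n, (t R.1).indicator v P := ENNReal.tsum_comm
    _ ≤ ∑' R : ↥S, (h₁ R + h₂ R) := ENNReal.tsum_le_tsum keybound
    _ = (∑' R : ↥S, h₁ R) + ∑' R : ↥S, h₂ R := ENNReal.tsum_add
    _ ≤ ENNReal.ofReal Λ * (ENNReal.ofReal Λ₀ * volume Q.toSet) +
        ENNReal.ofReal Λ * volume Q.toSet := add_le_add bound1 bound2
    _ ≤ ENNReal.ofReal (Λ * (Λ₀ + 1)) * volume Q.toSet := harith
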